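/- Let Ω₁, …, Ωₙ be nonempty closed convex sets in a reflexive Banach space X with empty intersection, and set D(x) = max_i d(x, Ωᵢ). If at least one Ωᵢ is bounded, then D attains its infimum over X, i.e., the smallest intersecting ball problem has a solution. -/

import Mathlib

/-!
`D` is convex and continuous, and its sublevel sets are bounded since they stay within bounded
distance of the bounded set `Ω i₀`. Closed convex sets are weakly closed, so `D` is weakly lower
semicontinuous, and in a reflexive space bounded weakly closed sets are weakly compact
(Banach–Alaoglu in the bidual). Hence `D` attains its minimum on a nonempty sublevel set, and
that minimum is global.
-/

open Metric NormedSpace Set Bornology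

theorem convexOn_infDist {X : Type*} [SeminormedAddCommGroup X] [NormedSpace ℝ X] {s : Set X}
    (hs : Convex ℝ s) : ConvexOn ℝ univ (infDist · s) := by
  refine ⟨convex_univ, fun a _ b _ t u ht hu htu => ?_⟩
  rcases s.eq_empty_or_nonempty with rfl | hne
  · simp
  simp only [smul_eq_mul]
  refine le_of_forall_pos_le_add fun ε hε => ?_
  obtain ⟨y, hy, hay⟩ := (infDist_lt_iff hne).1 (lt_add_of_pos_right (infDist a s) hε)
  obtain ⟨z, hz, hbz⟩ := (infDist_lt_iff hne).1 (lt_add_of_pos_right (infDist b s) hε)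
  calc infDist (t • a + u • b) s ≤ dist (t • a + u • b) (t • y + u • z) :=
        infDist_le_dist_of_mem (hs hy hz ht hu htu)
    _ ≤ dist (t • a) (t • y) + dist (u • b) (u • z) := dist_add_add_le _ _ _ _
    _ = t * dist a y + u * dist b z := by
        rw [dist_smul₀, dist_smul₀, Real.norm_of_nonneg ht, Real.norm_of_nonneg hu]
    _ ≤ t * (infDist a s + ε) + u * (infDist b s + ε) := by gcongr
    _ = t * infDist a s + u * infDist b s + ε := by linear_combination ε * htu

theorem ConvexOn.finset_sup'_apply {E ι : Type*} [AddCommMonoid E] [Module ℝ E] {t : Set E}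
    {s : Finset ι} (hs : s.Nonempty) {f : ι → E → ℝ} (hf : ∀ i ∈ s, ConvexOn ℝ t (f i)) :
    ConvexOn ℝ t (fun x => s.sup' hs (f · x)) := by
  simp only [← Finset.sup'_apply]
  exact Finset.sup'_induction hs f (fun _ hg _ hh => hg.sup hh) hf

theorem isBounded_setOf_infDist_le {X : Type*} [PseudoMetricSpace X] {s : Set X}
    (hs : IsBounded s) (hne : s.Nonempty) (c : ℝ) : IsBounded {x | infDist x s ≤ c} := by
  obtain ⟨y, hy⟩ := hne
  refine (isBounded_closedBall (x := y) (r := c + diam s)).subset fun x hx => ?_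
  rw [mem_closedBall]
  linarith [dist_le_infDist_add_diam (x := x) hs hy, hx.out]

section WeakTopology

variable {E : Type*} [AddCommGroup E] [Module ℝ E] [TopologicalSpace E] [IsTopologicalAddGroup E]
  [ContinuousSMul ℝ E] [LocallyConvexSpace ℝ E]

theorem Convex.isClosed_toWeakSpace_image {s : Set E} (hconv : Convex ℝ s) (hs : IsClosed s) :
    IsClosed (toWeakSpace ℝ E '' s) := by
  rw [← hs.closure_eq, hconv.toWeakSpace_closure ℝ]
  exact isClosed_closure

theorem ConvexOn.lowerSemicontinuous_toWeakSpace_symm {f : E → ℝ} (hconv : ConvexOn ℝ univ f)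
    (hf : LowerSemicontinuous f) :
    LowerSemicontinuous fun x : WeakSpace ℝ E => f ((toWeakSpace ℝ E).symm x) := by
  refine lowerSemicontinuous_iff_isClosed_preimage.2 fun c => ?_
  have hconv_c : Convex ℝ {x | f x ≤ c} := by simpa using hconv.convex_le c
  convert hconv_c.isClosed_toWeakSpace_image (hf.isClosed_preimage c) using 1
  exact ((toWeakSpace ℝ E).image_eq_preimage_symm {x | f x ≤ c}).symm

end WeakTopology

section Reflexive

variable {X : Type*} [NormedAddCommGroup X] [NormedSpace ℝ X]

theorem isCompact_toWeakSpace_image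
    (hrefl : Function.Surjective (inclusionInDoubleDual ℝ X)) {s : Set X} (hb : IsBounded s)
    (hs : IsClosed s) (hconv : Convex ℝ s) : IsCompact (toWeakSpace ℝ X '' s) := by
  rw [← (hconv.isClosed_toWeakSpace_image hs).closure_eq]
  refine isCompact_closure_of_isBounded ℝ X _ (by rwa [(toWeakSpace ℝ X).injective.preimage_image]) fun φ _ => ?_
  obtain ⟨x, hx⟩ := hrefl (WeakDual.toStrongDual φ)
  exact ⟨toWeakSpace ℝ X x, congrArg StrongDual.toWeakDual hx⟩

theorem exists_isMinOn_of_isBounded_sublevel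
    (hrefl : Function.Surjective (inclusionInDoubleDual ℝ X)) {f : X → ℝ}
    (hconv : ConvexOn ℝ univ f) (hf : LowerSemicontinuous f) (x₀ : X)
    (hb : IsBounded {x | f x ≤ f x₀}) :
    ∃ x, IsMinOn f univ x := by
  have hcpt := isCompact_toWeakSpace_image hrefl hb (hf.isClosed_preimage (f x₀))
    (by simpa using hconv.convex_le (f x₀))
  obtain ⟨_, ⟨x, hx, rfl⟩, hmin⟩ :=
    ((hconv.lowerSemicontinuous_toWeakSpace_symm hf).lowerSemicontinuousOn _).exists_isMinOn
      (Set.Nonempty.image _ ⟨x₀, le_refl (f x₀)⟩) hcpt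
  refine ⟨x, fun y _ => ?_⟩
  by_cases hy : f y ≤ f x₀
  · simpa using hmin ⟨y, hy, rfl⟩
  · exact hx.trans (not_le.1 hy).le

end Reflexive

/-- In a reflexive Banach space (reflexivity expressed as the surjectivity of the
canonical inclusion into the double dual), the smallest intersecting ball problem
generated by finitely many nonempty closed convex sets with empty intersection,
at least one of which is bounded, has a solution. -/
theorem exists_min_of_smallest_intersecting_ball
    {X : Type*} [NormedAddCommGroup X] [NormedSpace ℝ X]
    (hrefl : Function.Surjective (NormedSpace.inclusionInDoubleDual ℝ X))
    (n : ℕ) (hn : 1 < n) (Ω : Fin n → Set X)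
    (hne : ∀ i, (Ω i).Nonempty)
    (hco : ∀ i, Convex ℝ (Ω i))
    (i₀ : Fin n) (hbd : Bornology.IsBounded (Ω i₀)) :
    ∃ xbar : X, IsMinOn
      (fun x => Finset.univ.sup' (Finset.univ_nonempty_iff.2 ⟨⟨0, by omega⟩⟩)
        fun i => Metric.infDist x (Ω i)) Set.univ xbar :=
  exists_isMinOn_of_isBounded_sublevel hrefl
    (ConvexOn.finset_sup'_apply _ fun i _ => convexOn_infDist (hco i))
    (Continuous.finset_sup'_apply _ fun i _ => continuous_infDist_pt (Ω i)).lowerSemicontinuous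
    0
    ((isBounded_setOf_infDist_le hbd (hne i₀) _).subset fun _ hx =>
      (Finset.le_sup' (fun i => infDist _ (Ω i)) (Finset.mem_univ i₀)).trans hx)
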